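/- Let X be a real N × d matrix with d columns of which a subset of d′ columns is retained to form the N × d′ submatrix X′; assume each column of X has ℓ2 norm 1 and that X′ᵀX′ is invertible. Then for every positive real α with α ≤ 2/(d+1), the series α·∑_{i=0}^{∞} (I − α X′ᵀX′)^i converges and equals (X′ᵀX′)^{−1}. -/

import Mathlib

open Matrix Filter Finset

/-!
`G = X'ᵀX'` is positive definite, so its eigenvalues are positive, and each is at most
`tr G = d' ≤ d` because the columns of `X'` are unit vectors. As `α d < 2`, every
eigenvalue `1 - αλ` of `B = 1 - αG` lies in `(-1, 1)`, so `Bᵏ → 0` by the spectral theorem,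
and the partial sums `α ∑_{i<k} Bⁱ = G⁻¹ (1 - Bᵏ)` tend to `G⁻¹`.
-/

theorem tendsto_smul_geom_sum_one_sub_smul {𝕜 R : Type*} [CommSemiring 𝕜] [Ring R]
    [Algebra 𝕜 R] [TopologicalSpace R] [IsTopologicalRing R] {a : R} (ha : IsUnit a) {c : 𝕜}
    (hpow : Tendsto (fun k : ℕ => (1 - c • a) ^ k) atTop (nhds 0)) :
    Tendsto (fun k : ℕ => c • ∑ i ∈ range k, (1 - c • a) ^ i) atTop
      (nhds (Ring.inverse a)) := by
  have hsum : ∀ k, c • ∑ i ∈ range k, (1 - c • a) ^ i =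
      Ring.inverse a * (1 - (1 - c • a) ^ k) := by
    intro k
    rw [← mul_neg_geom_sum, sub_sub_cancel, smul_mul_assoc, ← mul_smul_comm,
      Ring.inverse_mul_cancel_left _ _ ha]
  simp_rw [hsum]
  simpa using ((tendsto_const_nhds (x := (1 : R))).sub hpow).const_mul (Ring.inverse a)

namespace Matrix

open Unitary
open scoped ComplexOrder

theorem trace_transpose_mul_self {m n R : Type*} [Fintype m] [Fintype n] [CommSemiring R]
    (A : Matrix m n R) : (Aᵀ * A).trace = ∑ j, ∑ i, A i j ^ 2 := by
  simp [trace, mul_apply, sq]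

variable {n 𝕜 : Type*} [Fintype n] [DecidableEq n] [RCLike 𝕜]

theorem PosSemidef.eigenvalues_le_re_trace {A : Matrix n n 𝕜} (hA : A.PosSemidef) (i : n) :
    hA.1.eigenvalues i ≤ RCLike.re A.trace := by
  rw [hA.1.trace_eq_sum_eigenvalues, ← RCLike.ofReal_sum, RCLike.ofReal_re]
  exact single_le_sum (fun j _ => hA.eigenvalues_nonneg j) (mem_univ i)

theorem tendsto_diagonal_pow_atTop_nhds_zero {μ : n → 𝕜} (hμ : ∀ i, ‖μ i‖ < 1) :
    Tendsto (fun k : ℕ => diagonal μ ^ k) atTop (nhds 0) := by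
  simp_rw [diagonal_pow]
  rw [← diagonal_zero]
  exact (continuous_id.matrix_diagonal.tendsto _).comp
    (tendsto_pi_nhds.2 fun i => tendsto_pow_atTop_nhds_zero_of_norm_lt_one (hμ i))

theorem IsHermitian.tendsto_pow_one_sub_smul {A : Matrix n n 𝕜} (hA : A.IsHermitian) {c : ℝ}
    (hc : ∀ i, |1 - c * hA.eigenvalues i| < 1) :
    Tendsto (fun k : ℕ => (1 - c • A) ^ k) atTop (nhds 0) := by
  set U := hA.eigenvectorUnitary
  set μ : n → 𝕜 := fun i => ((1 - c * hA.eigenvalues i : ℝ) : 𝕜)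
  have hconj : 1 - c • A = conjStarAlgAut 𝕜 _ U (diagonal μ) := by
    conv_lhs => rw [hA.spectral_theorem]
    rw [← map_one (conjStarAlgAut 𝕜 _ U), RCLike.real_smul_eq_coe_smul (K := 𝕜), ← map_smul,
      ← map_sub]
    congr 1
    ext i j
    by_cases h : i = j <;> simp [μ, h]
  have hμ : ∀ i, ‖μ i‖ < 1 := fun i => by simpa only [μ, RCLike.norm_ofReal] using hc i
  simp_rw [hconj, ← map_pow, conjStarAlgAut_apply]
  simpa using ((tendsto_diagonal_pow_atTop_nhds_zero hμ).const_mul (U : Matrix n n 𝕜)).mul_const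
    (star U : Matrix n n 𝕜)

end Matrix

/-- Let `X'` be the `N × d'` submatrix of `X` obtained by retaining an injectively
chosen subset of `d'` of the `d` columns of `X`, where every column of `X` is
`ℓ2`-normalized and `X'ᵀX'` is invertible. Then for every positive
`α ≤ 2/(d+1)`, the series `α • ∑_{i=0}^{∞} (I - α X'ᵀX')^i` converges to
`(X'ᵀX')⁻¹`. -/
theorem submatrix_gram_inverse_neumann_series (N d d' : ℕ) (X : Matrix (Fin N) (Fin d) ℝ)
    (hcol : ∀ j : Fin d, ∑ i : Fin N, (X i j) ^ 2 = 1)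
    (f : Fin d' → Fin d) (hf : Function.Injective f)
    (X' : Matrix (Fin N) (Fin d') ℝ) (hX' : X' = X.submatrix id f)
    (hinv : IsUnit (X'ᵀ * X'))
    (α : ℝ) (hα : 0 < α) (hα' : α ≤ 2 / ((d : ℝ) + 1)) :
    Tendsto
      (fun n : ℕ =>
        α • ∑ i ∈ Finset.range (n + 1), ((1 : Matrix (Fin d') (Fin d') ℝ) - α • (X'ᵀ * X')) ^ i)
      atTop (nhds ((X'ᵀ * X')⁻¹)) := by
  have hG : (X'ᵀ * X').PosDef := by
    rw [← conjTranspose_eq_transpose_of_trivial] at hinv ⊢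
    exact (posSemidef_conjTranspose_mul_self X').posDef_iff_isUnit.mpr hinv
  have htrace : (X'ᵀ * X').trace = d' := by
    rw [trace_transpose_mul_self, hX']
    simp [hcol]
  have hd'd : (d' : ℝ) ≤ d := by exact_mod_cast (by simpa using Fintype.card_le_of_injective f hf)
  have hαd : α * d < 2 := by
    rw [le_div_iff₀ (by positivity)] at hα'
    linarith
  have hspec : ∀ i, |1 - α * hG.1.eigenvalues i| < 1 := by
    intro i
    have hpos := hG.eigenvalues_pos i
    have hle := hG.posSemidef.eigenvalues_le_re_trace i
    rw [RCLike.re_to_real, htrace] at hle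
    rw [abs_lt]
    constructor <;> nlinarith
  rw [nonsing_inv_eq_ringInverse]
  exact (tendsto_smul_geom_sum_one_sub_smul hinv (hG.1.tendsto_pow_one_sub_smul hspec)).comp
    (tendsto_add_atTop_nat 1)
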